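/- arXiv:1107.2193 — 4 statements merged into one kernel-verified Lean document; each statement's English description precedes it below -/
import Mathlib

section
/- Let 0 < α < 2. Let (γ_i)_{i≥1} be i.i.d. random variables with exponential distribution of parameter 1 and set Γ_i = γ_1 + ... + γ_i. Let (ε_i)_{i≥1} be i.i.d. real random variables with E|ε_1| < ∞ and (W_i)_{i≥1} be i.i.d. nonnegative real random variables with E W_1 < ∞, such that the three sequences (Γ_i), (ε_i), (W_i) are mutually independent. Then almost surely ∑_{i=1}^∞ |Γ_i^{-1/α} − i^{-1/α}| · |ε_i| · W_i < ∞. -/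
/-!
By the strong law of large numbers `Γ_i / i → 1` a.s., so eventually `Γ_i ≥ i / 2`, and the mean
value theorem bounds `|Γ_i^{-1/α} - i^{-1/α}|` by a constant times `i^{-1/α-1} |Γ_i - i|`.
Since `Γ_i - i` is centred with variance `i`, `E|Γ_i - i| ≤ √i`; by independence the series
`∑ i^{-1/α-1} |Γ_i - i| |ε_i| W_i` therefore has expectation at most
`E|ε_1| E W_1 ∑ i^{-1/α-1/2}`, which is finite exactly because `α < 2`, so it converges a.s.
-/

open MeasureTheory ProbabilityTheory Filter Finset Topology
open scoped ENNReal Nat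

lemma lintegral_ofReal_pow_expMeasure_one (n : ℕ) :
    ∫⁻ x, ENNReal.ofReal (x ^ n) ∂expMeasure 1 = n ! := by
  -- `x ^ n e^{-x}` is `n !` times the density of the Gamma(n + 1, 1) law.
  have hpdf : ∀ x, exponentialPDF 1 x * ENNReal.ofReal (x ^ n) = n ! * gammaPDF (n + 1) 1 x := by
    intro x
    rcases lt_or_ge x 0 with hx | hx
    · simp [exponentialPDF_of_neg hx, gammaPDF_of_neg hx]
    · rw [exponentialPDF_of_nonneg hx, gammaPDF_of_nonneg hx, ← ENNReal.ofReal_natCast,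
        ← ENNReal.ofReal_mul (by positivity), ← ENNReal.ofReal_mul (by positivity)]
      congr 1
      have : (n ! : ℝ) ≠ 0 := by positivity
      simp only [one_mul, Real.one_rpow, Real.Gamma_nat_eq_factorial, one_div,
        add_sub_cancel_right, Real.rpow_natCast]
      field_simp
  have hexp : expMeasure 1 = volume.withDensity (exponentialPDF 1) := rfl
  have hm : Measurable (exponentialPDF 1) := (measurable_exponentialPDFReal 1).ennreal_ofReal
  rw [hexp, lintegral_withDensity_eq_lintegral_mul _ hm (by fun_prop)]
  simp only [Pi.mul_apply, hpdf]
  rw [lintegral_const_mul' _ _ (ENNReal.natCast_ne_top _),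
    lintegral_gammaPDF_eq_one (by positivity) one_pos, mul_one]

lemma ae_nonneg_expMeasure_one : ∀ᵐ x ∂expMeasure 1, 0 ≤ x := by
  have hexp : expMeasure 1 = volume.withDensity (exponentialPDF 1) := rfl
  have hneg : {x : ℝ | ¬0 ≤ x} = Set.Iio 0 := by ext; simp
  rw [ae_iff, hneg, hexp, withDensity_apply _ measurableSet_Iio]
  exact lintegral_exponentialPDF_of_nonpos le_rfl

lemma integrable_pow_expMeasure_one (n : ℕ) : Integrable (fun x : ℝ ↦ x ^ n) (expMeasure 1) := by
  refine (lintegral_ofReal_ne_top_iff_integrable (by fun_prop) ?_).1 ?_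
  · filter_upwards [ae_nonneg_expMeasure_one] with x hx using pow_nonneg hx n
  · simp [lintegral_ofReal_pow_expMeasure_one]

lemma integral_pow_expMeasure_one (n : ℕ) : ∫ x, x ^ n ∂expMeasure 1 = n ! := by
  rw [integral_eq_lintegral_of_nonneg_ae _ (by fun_prop), lintegral_ofReal_pow_expMeasure_one]
  · simp
  · filter_upwards [ae_nonneg_expMeasure_one] with x hx using pow_nonneg hx n

lemma memLp_id_expMeasure_one : MemLp id 2 (expMeasure 1) :=
  (memLp_two_iff_integrable_sq aestronglyMeasurable_id).2 (integrable_pow_expMeasure_one 2)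

lemma integral_id_expMeasure_one : ∫ x, x ∂expMeasure 1 = 1 := by
  simpa using integral_pow_expMeasure_one 1

lemma variance_id_expMeasure_one : Var[id; expMeasure 1] = 1 := by
  have := isProbabilityMeasure_expMeasure one_pos
  rw [variance_eq_sub memLp_id_expMeasure_one]
  simp only [Pi.pow_apply, id_eq, integral_pow_expMeasure_one, integral_id_expMeasure_one]
  norm_num

lemma ProbabilityTheory.HasLaw.memLp_two_of_expMeasure_one {Ω : Type*} [MeasurableSpace Ω]
    {P : Measure Ω} {X : Ω → ℝ} (hX : HasLaw X (expMeasure 1) P) : MemLp X 2 P := by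
  have h := memLp_id_expMeasure_one
  rwa [← hX.map_eq, memLp_map_measure_iff aestronglyMeasurable_id hX.aemeasurable] at h

lemma integral_abs_sub_integral_le_sqrt_variance {Ω : Type*} [MeasurableSpace Ω] {μ : Measure Ω}
    [IsProbabilityMeasure μ] {X : Ω → ℝ} (hX : MemLp X 2 μ) :
    ∫ ω, |X ω - μ[X]| ∂μ ≤ √(Var[X; μ]) := by
  have hY : MemLp (fun ω ↦ |X ω - μ[X]|) 2 μ := (hX.sub (memLp_const _)).abs
  have hYsq : μ[(fun ω ↦ |X ω - μ[X]|) ^ 2] = Var[X; μ] := by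
    simp [variance_eq_integral hX.aemeasurable]
  -- `(E|Y|)² ≤ E[Y²]` is the nonnegativity of the variance of `Y = |X - E X|`.
  have := variance_nonneg (fun ω ↦ |X ω - μ[X]|) μ
  rw [variance_eq_sub hY, hYsq] at this
  exact Real.le_sqrt_of_sq_le (by linarith)

lemma integral_abs_sum_range_sub_le_sqrt {Ω : Type*} [MeasurableSpace Ω] {μ : Measure Ω}
    [IsProbabilityMeasure μ] {γ : ℕ → Ω → ℝ}
    (hindep : Pairwise fun i j ↦ γ i ⟂ᵢ[μ] γ j) (hlaw : ∀ i, HasLaw (γ i) (expMeasure 1) μ)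
    (n : ℕ) :
    ∫ ω, |∑ j ∈ range n, γ j ω - n| ∂μ ≤ √n := by
  have hL2 : ∀ j ∈ range n, MemLp (γ j) 2 μ := fun j _ ↦ (hlaw j).memLp_two_of_expMeasure_one
  have hmean : ∫ ω, ∑ j ∈ range n, γ j ω ∂μ = n := by
    rw [integral_finsetSum _ fun j hj ↦ (hL2 j hj).integrable one_le_two]
    simp [fun j ↦ (hlaw j).integral_eq, integral_id_expMeasure_one]
  have hvar : Var[∑ j ∈ range n, γ j; μ] = n := by
    rw [IndepFun.variance_sum hL2 fun i _ j _ hij ↦ hindep hij]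
    simp [fun j ↦ (hlaw j).variance_eq, variance_id_expMeasure_one]
  simpa [hmean, hvar] using integral_abs_sub_integral_le_sqrt_variance (memLp_finsetSum' _ hL2)

lemma abs_rpow_sub_rpow_le_of_half_le {q c x : ℝ} (hq : q ≤ 1) (hc : 0 < c) (hx : c / 2 ≤ x) :
    |x ^ q - c ^ q| ≤ |q| * (c / 2) ^ (q - 1) * |x - c| := by
  have hc2 : 0 < c / 2 := by positivity
  have hderiv : ∀ t ∈ Set.Ici (c / 2),
      HasDerivWithinAt (· ^ q) (q * t ^ (q - 1)) (Set.Ici (c / 2)) t :=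
    fun t ht ↦ (Real.hasDerivAt_rpow_const (Or.inl (hc2.trans_le ht).ne')).hasDerivWithinAt
  have hbound : ∀ t ∈ Set.Ici (c / 2), ‖q * t ^ (q - 1)‖ ≤ |q| * (c / 2) ^ (q - 1) := by
    intro t ht
    rw [Real.norm_eq_abs, abs_mul, abs_of_nonneg (Real.rpow_nonneg (hc2.le.trans ht) _)]
    exact mul_le_mul_of_nonneg_left (Real.rpow_le_rpow_of_nonpos hc2 ht (by linarith))
      (abs_nonneg q)
  simpa [Real.norm_eq_abs] using (convex_Ici _).norm_image_sub_le_of_norm_hasDerivWithin_le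
    hderiv hbound (Set.mem_Ici.2 (half_le_self hc.le)) (Set.mem_Ici.2 hx)

lemma summable_abs_rpow_sub_mul_of_eventually_half_le {q : ℝ} (hq : q ≤ 1) {s b : ℕ → ℝ}
    (hs : ∀ᶠ i : ℕ in atTop, ((i : ℝ) + 1) / 2 ≤ s i) (hb : ∀ i, 0 ≤ b i)
    (h : Summable fun i : ℕ ↦ ((i : ℝ) + 1) ^ (q - 1) * (|s i - (i + 1)| * b i)) :
    Summable fun i : ℕ ↦ |s i ^ q - ((i : ℝ) + 1) ^ q| * b i := by
  refine (h.mul_left (|q| * 2 ^ (1 - q))).of_norm_bounded_eventually_nat ?_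
  filter_upwards [hs] with i hi
  have hc : (0 : ℝ) < i + 1 := by positivity
  have hhalf : (((i : ℝ) + 1) / 2) ^ (q - 1) = 2 ^ (1 - q) * ((i : ℝ) + 1) ^ (q - 1) := by
    rw [Real.div_rpow hc.le zero_le_two, div_eq_mul_inv, ← Real.rpow_neg zero_le_two, neg_sub,
      mul_comm]
  calc ‖|s i ^ q - ((i : ℝ) + 1) ^ q| * b i‖
      = |s i ^ q - ((i : ℝ) + 1) ^ q| * b i := by
        rw [Real.norm_eq_abs, abs_of_nonneg (mul_nonneg (abs_nonneg _) (hb i))]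
    _ ≤ |q| * (((i : ℝ) + 1) / 2) ^ (q - 1) * |s i - (i + 1)| * b i := by
        gcongr
        · exact hb i
        · exact abs_rpow_sub_rpow_le_of_half_le hq hc hi
    _ = |q| * 2 ^ (1 - q) * (((i : ℝ) + 1) ^ (q - 1) * (|s i - (i + 1)| * b i)) := by
        rw [hhalf]; ring

lemma eventually_half_le_sum_range_succ {x : ℕ → ℝ}
    (h : Tendsto (fun n : ℕ ↦ (n : ℝ)⁻¹ • ∑ j ∈ range n, x j) atTop (𝓝 1)) :
    ∀ᶠ i : ℕ in atTop, ((i : ℝ) + 1) / 2 ≤ ∑ j ∈ range (i + 1), x j := by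
  have hlt := (tendsto_add_atTop_nat 1).eventually (h.eventually (lt_mem_nhds one_half_lt_one))
  filter_upwards [hlt] with i hi
  have hc : (0 : ℝ) < i + 1 := by positivity
  push_cast at hi
  rw [smul_eq_mul, ← div_eq_inv_mul, lt_div_iff₀ hc] at hi
  linarith

lemma summable_nat_add_one_rpow_sub_one_mul_sqrt {q : ℝ} (hq : q < -1 / 2) :
    Summable fun i : ℕ ↦ ((i : ℝ) + 1) ^ (q - 1) * √((i : ℝ) + 1) := by
  have h := (summable_nat_add_iff 1).2 (Real.summable_nat_rpow.2 (by linarith : q - 1 / 2 < -1))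
  refine h.congr fun i ↦ ?_
  rw [Real.sqrt_eq_rpow, ← Real.rpow_add (by positivity)]
  push_cast
  ring_nf

lemma ae_summable_of_summable_integral {X ι : Type*} [MeasurableSpace X] {μ : Measure X}
    [Countable ι] {f : ι → X → ℝ} (hf0 : ∀ i x, 0 ≤ f i x) (hf : ∀ i, Integrable (f i) μ)
    (h : Summable fun i ↦ ∫ x, f i x ∂μ) :
    ∀ᵐ x ∂μ, Summable fun i ↦ f i x := by
  have hnorm : ∀ i, eLpNorm (f i) 1 μ = ENNReal.ofReal (∫ x, f i x ∂μ) := fun i ↦ by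
    rw [eLpNorm_one_eq_lintegral_enorm, ← ofReal_integral_norm_eq_lintegral_enorm (hf i)]
    simp_rw [Real.norm_of_nonneg (hf0 i _)]
  have hfin : ∑' i, eLpNorm (f i) 1 μ ≠ ∞ := by
    simp_rw [hnorm, ← ENNReal.ofReal_tsum_of_nonneg (fun i ↦ integral_nonneg (hf0 i)) h]
    exact ENNReal.ofReal_ne_top
  filter_upwards [summable_norm_of_tsum_eLpNorm_ne_top le_rfl
    (fun i ↦ (hf i).aestronglyMeasurable) hfin] with x hx
  simpa [Real.norm_of_nonneg (hf0 _ x)] using hx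

lemma indepFun_sum_range_prodMk {Ω : Type*} [MeasurableSpace Ω] {μ : Measure Ω}
    {γ ε W : ℕ → Ω → ℝ} (hindep : iIndepFun (Sum.elim γ (Sum.elim ε W)) μ)
    (hγm : ∀ i, Measurable (γ i)) (hεm : ∀ i, Measurable (ε i)) (hWm : ∀ i, Measurable (W i))
    (n i : ℕ) :
    (∑ j ∈ range n, γ j) ⟂ᵢ[μ] fun ω ↦ (ε i ω, W i ω) := by
  have hm : ∀ k, Measurable (Sum.elim γ (Sum.elim ε W) k) := by
    rintro (j | j | j) <;> simp [hγm, hεm, hWm]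
  set S : Finset (ℕ ⊕ ℕ ⊕ ℕ) := (range n).map .inl
  set T : Finset (ℕ ⊕ ℕ ⊕ ℕ) := {.inr (.inl i), .inr (.inr i)}
  have hε_mem : .inr (.inl i) ∈ T := by simp [T]
  have hW_mem : .inr (.inr i) ∈ T := by simp [T]
  have h := hindep.indepFun_finset S T (by simp [S, T, disjoint_left]) hm
  have hsum : Measurable fun v : S → ℝ ↦ ∑ k, v k := by fun_prop
  have hpair : Measurable fun v : T → ℝ ↦ (v ⟨_, hε_mem⟩, v ⟨_, hW_mem⟩) := by fun_prop
  convert h.comp hsum hpair using 1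
  · ext ω
    simp only [Finset.sum_apply, Function.comp_apply]
    rw [Finset.sum_coe_sort S (fun k ↦ Sum.elim γ (Sum.elim ε W) k ω), Finset.sum_map]
    rfl
  · rfl

section Majorant

variable {Ω : Type*} [MeasurableSpace Ω] {μ : Measure Ω} {γ ε W : ℕ → Ω → ℝ}

lemma indepFun_abs_sum_range_sub_abs_mul (hindep : iIndepFun (Sum.elim γ (Sum.elim ε W)) μ)
    (hγm : ∀ i, Measurable (γ i)) (hεm : ∀ i, Measurable (ε i)) (hWm : ∀ i, Measurable (W i))
    (n i : ℕ) (c : ℝ) :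
    (fun ω ↦ |∑ j ∈ range n, γ j ω - c|) ⟂ᵢ[μ] fun ω ↦ |ε i ω| * W i ω := by
  have hφ : Measurable fun x : ℝ ↦ |x - c| := by fun_prop
  have hψ : Measurable fun p : ℝ × ℝ ↦ |p.1| * p.2 := by fun_prop
  simpa [Function.comp_def] using (indepFun_sum_range_prodMk hindep hγm hεm hWm n i).comp hφ hψ

lemma indepFun_abs_of_iIndepFun_sumElim (hindep : iIndepFun (Sum.elim γ (Sum.elim ε W)) μ)
    (i : ℕ) : (fun ω ↦ |ε i ω|) ⟂ᵢ[μ] W i :=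
  (hindep.indepFun (i := .inr (.inl i)) (j := .inr (.inr i)) (by simp)).comp
    measurable_abs measurable_id

lemma integrable_abs_sum_range_sub_mul (hindep : iIndepFun (Sum.elim γ (Sum.elim ε W)) μ)
    (hγm : ∀ i, Measurable (γ i)) (hεm : ∀ i, Measurable (ε i)) (hWm : ∀ i, Measurable (W i))
    (hγlaw : ∀ i, HasLaw (γ i) (expMeasure 1) μ) {i : ℕ} (hεint : Integrable (ε i) μ)
    (hWint : Integrable (W i) μ) (n : ℕ) :
    Integrable (fun ω ↦ |∑ j ∈ range n, γ j ω - n| * (|ε i ω| * W i ω)) μ := by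
  have := hindep.isProbabilityMeasure
  have hSint : Integrable (fun ω ↦ |∑ j ∈ range n, γ j ω - n|) μ :=
    ((integrable_finsetSum _ fun j _ ↦
      (hγlaw j).memLp_two_of_expMeasure_one.integrable one_le_two).sub (integrable_const _)).abs
  exact (indepFun_abs_sum_range_sub_abs_mul hindep hγm hεm hWm n i n).integrable_mul hSint
    ((indepFun_abs_of_iIndepFun_sumElim hindep i).integrable_mul hεint.abs hWint)

lemma integral_abs_sum_range_sub_mul_le (hindep : iIndepFun (Sum.elim γ (Sum.elim ε W)) μ)
    (hγm : ∀ i, Measurable (γ i)) (hεm : ∀ i, Measurable (ε i)) (hWm : ∀ i, Measurable (W i))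
    (hγlaw : ∀ i, HasLaw (γ i) (expMeasure 1) μ) {i : ℕ} (hW0 : ∀ ω, 0 ≤ W i ω) (n : ℕ) :
    ∫ ω, |∑ j ∈ range n, γ j ω - n| * (|ε i ω| * W i ω) ∂μ
      ≤ √n * ((∫ ω, |ε i ω| ∂μ) * ∫ ω, W i ω ∂μ) := by
  have := hindep.isProbabilityMeasure
  rw [(indepFun_abs_sum_range_sub_abs_mul hindep hγm hεm hWm n i n).integral_fun_mul_eq_mul_integral
      (by fun_prop) (by fun_prop),
    (indepFun_abs_of_iIndepFun_sumElim hindep i).integral_fun_mul_eq_mul_integral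
      (by fun_prop) (by fun_prop)]
  gcongr
  · exact mul_nonneg (integral_nonneg fun ω ↦ abs_nonneg _) (integral_nonneg hW0)
  · exact integral_abs_sum_range_sub_le_sqrt
      (fun j k hjk ↦ hindep.indepFun (Sum.inl_injective.ne hjk)) hγlaw n

lemma ae_summable_rpow_mul_abs_sum_range_sub_mul
    (hindep : iIndepFun (Sum.elim γ (Sum.elim ε W)) μ)
    (hγm : ∀ i, Measurable (γ i)) (hεm : ∀ i, Measurable (ε i)) (hWm : ∀ i, Measurable (W i))
    (hγlaw : ∀ i, HasLaw (γ i) (expMeasure 1) μ) (hεd : ∀ i, IdentDistrib (ε i) (ε 0) μ μ)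
    (hWd : ∀ i, IdentDistrib (W i) (W 0) μ μ) (hεint : Integrable (ε 0) μ)
    (hWint : Integrable (W 0) μ) (hW0 : ∀ i ω, 0 ≤ W i ω) {q : ℝ} (hq : q < -1 / 2) :
    ∀ᵐ ω ∂μ, Summable fun i : ℕ ↦
      ((i : ℝ) + 1) ^ (q - 1) * (|∑ j ∈ range (i + 1), γ j ω - (i + 1)| * (|ε i ω| * W i ω)) := by
  have hint := fun i ↦ integrable_abs_sum_range_sub_mul hindep hγm hεm hWm hγlaw
    ((hεd i).integrable_iff.2 hεint) ((hWd i).integrable_iff.2 hWint) (i + 1)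
  have hbound := fun i ↦ integral_abs_sum_range_sub_mul_le hindep hγm hεm hWm hγlaw (hW0 i) (i + 1)
  push_cast at hint hbound
  have hterm_nonneg : ∀ (i : ℕ) ω, 0 ≤ ((i : ℝ) + 1) ^ (q - 1) *
      (|∑ j ∈ range (i + 1), γ j ω - (i + 1)| * (|ε i ω| * W i ω)) := fun i ω ↦ by
    have := hW0 i ω
    positivity
  refine ae_summable_of_summable_integral hterm_nonneg (fun i ↦ (hint i).const_mul _) ?_
  refine ((summable_nat_add_one_rpow_sub_one_mul_sqrt hq).mul_right
    ((∫ ω, |ε 0 ω| ∂μ) * ∫ ω, W 0 ω ∂μ)).of_nonneg_of_le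
      (fun i ↦ integral_nonneg (hterm_nonneg i)) fun i ↦ ?_
  have hmean : (∫ ω, |ε i ω| ∂μ) * ∫ ω, W i ω ∂μ = (∫ ω, |ε 0 ω| ∂μ) * ∫ ω, W 0 ω ∂μ := by
    rw [(hWd i).integral_eq]
    congr 1
    exact ((hεd i).comp measurable_abs).integral_eq
  rw [integral_const_mul, mul_assoc, ← hmean]
  exact mul_le_mul_of_nonneg_left (hbound i) (by positivity)

end Majorant

theorem stmt0_general {Ω : Type*} [MeasureSpace Ω]
    (α : ℝ) (hα0 : 0 < α) (hα2 : α < 2)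
    (γ ε W : ℕ → Ω → ℝ)
    (hγm : ∀ i, Measurable (γ i)) (hεm : ∀ i, Measurable (ε i)) (hWm : ∀ i, Measurable (W i))
    (hindep : iIndepFun
      (Sum.elim γ (Sum.elim ε W) : ℕ ⊕ (ℕ ⊕ ℕ) → Ω → ℝ) ℙ)
    (hγd : ∀ i, Measure.map (γ i) ℙ = expMeasure 1)
    (hεd : ∀ i, IdentDistrib (ε i) (ε 0) ℙ ℙ)
    (hWd : ∀ i, IdentDistrib (W i) (W 0) ℙ ℙ)
    (hεint : Integrable (ε 0) ℙ)
    (hWnonneg : ∀ i ω, 0 ≤ W i ω)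
    (hWint : Integrable (W 0) ℙ) :
    ∀ᵐ ω ∂ℙ, Summable (fun i : ℕ =>
      |(∑ j ∈ Finset.range (i + 1), γ j ω) ^ (-1 / α) - ((i : ℝ) + 1) ^ (-1 / α)|
        * |ε i ω| * W i ω) := by
  have := hindep.isProbabilityMeasure
  have hγlaw : ∀ i, HasLaw (γ i) (expMeasure 1) ℙ := fun i ↦ ⟨(hγm i).aemeasurable, hγd i⟩
  have hlln := strong_law_ae γ ((hγlaw 0).memLp_two_of_expMeasure_one.integrable one_le_two)
    (fun i j hij ↦ hindep.indepFun (Sum.inl_injective.ne hij))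
    (fun i ↦ ⟨(hγm i).aemeasurable, (hγm 0).aemeasurable, by rw [hγd, hγd]⟩)
  rw [(hγlaw 0).integral_eq, integral_id_expMeasure_one] at hlln
  have hq : -1 / α < -1 / 2 := by
    rw [neg_div, neg_div]
    exact neg_lt_neg (one_div_lt_one_div_of_lt hα0 hα2)
  have hmaj := ae_summable_rpow_mul_abs_sum_range_sub_mul hindep hγm hεm hWm hγlaw hεd hWd
    hεint hWint hWnonneg hq
  filter_upwards [hlln, hmaj] with ω hω hω'
  simpa only [mul_assoc] using summable_abs_rpow_sub_mul_of_eventually_half_le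
    (by linarith) (eventually_half_le_sum_range_succ hω) (fun i ↦ mul_nonneg (abs_nonneg _)
      (hWnonneg i ω)) hω'

/-- Let `0 < α < 2`, `(γ_i)` i.i.d. exponential of parameter 1 with partial sums
`Γ_i`, `(ε_i)` i.i.d. real with `E|ε_1| < ∞`, `(W_i)` i.i.d. nonnegative with `E W_1 < ∞`,
the three sequences mutually independent (equivalently, all the variables are jointly
independent).  Then a.s. `∑_i |Γ_i^{-1/α} - i^{-1/α}| |ε_i| W_i < ∞`.
Indexing convention: the Lean index `i : ℕ` corresponds to the index `i+1` of the paper. -/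
theorem stmt0 {Ω : Type*} [MeasureSpace Ω] [IsProbabilityMeasure (ℙ : Measure Ω)]
    (α : ℝ) (hα0 : 0 < α) (hα2 : α < 2)
    (γ ε W : ℕ → Ω → ℝ)
    (hγm : ∀ i, Measurable (γ i)) (hεm : ∀ i, Measurable (ε i)) (hWm : ∀ i, Measurable (W i))
    (hindep : iIndepFun
      (Sum.elim γ (Sum.elim ε W) : ℕ ⊕ (ℕ ⊕ ℕ) → Ω → ℝ) ℙ)
    (hγd : ∀ i, Measure.map (γ i) ℙ = expMeasure 1)
    (hεd : ∀ i, IdentDistrib (ε i) (ε 0) ℙ ℙ)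
    (hWd : ∀ i, IdentDistrib (W i) (W 0) ℙ ℙ)
    (hεint : Integrable (ε 0) ℙ)
    (hWnonneg : ∀ i ω, 0 ≤ W i ω)
    (hWint : Integrable (W 0) ℙ) :
    ∀ᵐ ω ∂ℙ, Summable (fun i : ℕ =>
      |(∑ j ∈ Finset.range (i + 1), γ j ω) ^ (-1 / α) - ((i : ℝ) + 1) ^ (-1 / α)|
        * |ε i ω| * W i ω) :=
  stmt0_general α hα0 hα2 γ ε W hγm hεm hWm hindep hγd hεd hWd hεint hWnonneg hWint
end

section
/- Let 0 < α < m and let ε be a real random variable with E|ε|^α < ∞. Then ∑_{i=1}^∞ i^{-m/α} · E(|ε|^m · 1_{{|ε| ≤ i^{1/α}}}) < ∞. -/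
/-!
For `y = |ε|^α` and `p = m / α > 1`, the `i`-th term of the series is the expectation of
`(i+1)^(-p) y^p 1{y ≤ i+1}`. By the integral test, `∑_{i+1 ≥ y} (i+1)^(-p) ≤ C y^(1-p)` with
`C = 1 + 1/(p-1)` (the first term `⌈y⌉^(-p)` plus `∫_{⌈y⌉}^∞ x^(-p) dx`), so every partial sum of
these functions is at most `C y`, and the partial sums of the series are bounded by `C E|ε|^α`.
-/

open MeasureTheory ProbabilityTheory Filter

lemma sum_Ico_add_one_rpow_neg_le {p : ℝ} (hp : 1 < p) {N : ℕ} (hN : 0 < N) (K : ℕ) :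
    ∑ n ∈ Finset.Ico N K, ((n : ℝ) + 1) ^ (-p) ≤ (N : ℝ) ^ (1 - p) / (p - 1) := by
  have hNpos : (0 : ℝ) < N := by exact_mod_cast hN
  have anti : AntitoneOn (fun x : ℝ => x ^ (-p)) (Set.Icc N K) := fun a ha b _ hab =>
    Real.rpow_le_rpow_of_nonpos (hNpos.trans_le ha.1) hab (by linarith)
  have integrable := integrableOn_Ioi_rpow_of_lt (by linarith : -p < -1) hNpos
  have nonneg : ∀ t ∈ Set.Ioi (N : ℝ), 0 ≤ t ^ (-p) := fun t ht =>
    Real.rpow_nonneg (hNpos.trans ht).le _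
  calc ∑ n ∈ Finset.Ico N K, ((n : ℝ) + 1) ^ (-p)
      ≤ ∫ x in Set.Ioi (N : ℝ), x ^ (-p) := by
        exact_mod_cast anti.sum_Ico_le_integral integrable nonneg
    _ = (N : ℝ) ^ (1 - p) / (p - 1) := by
        rw [integral_Ioi_rpow_of_lt (by linarith) hNpos, show -p + 1 = -(p - 1) by ring, div_neg,
          neg_div, neg_neg, neg_sub]

lemma sum_filter_le_add_one_rpow_neg_le {p : ℝ} (hp : 1 < p) {y : ℝ} (hy : 0 < y)
    (s : Finset ℕ) :
    ∑ i ∈ s with y ≤ ((i : ℕ) : ℝ) + 1, ((i : ℝ) + 1) ^ (-p) ≤ (1 + 1 / (p - 1)) * y ^ (1 - p) := by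
  set N := ⌈y⌉₊
  have hN : 0 < N := Nat.ceil_pos.mpr hy
  have hyN : y ≤ N := Nat.le_ceil y
  have hN1 : (1 : ℝ) ≤ N := by exact_mod_cast hN
  obtain ⟨K, hK⟩ := s.exists_nat_subset_range
  have hsub : {i ∈ s | y ≤ ((i : ℕ) : ℝ) + 1} ⊆ Finset.Ico (N - 1) (N + K) := by
    intro i hi
    rw [Finset.mem_filter] at hi
    have : N ≤ i + 1 := Nat.ceil_le.mpr (by exact_mod_cast hi.2)
    have := Finset.mem_range.mp (hK hi.1)
    rw [Finset.mem_Ico]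
    omega
  calc ∑ i ∈ s with y ≤ ((i : ℕ) : ℝ) + 1, ((i : ℝ) + 1) ^ (-p)
      ≤ ∑ i ∈ Finset.Ico (N - 1) (N + K), ((i : ℝ) + 1) ^ (-p) :=
        Finset.sum_le_sum_of_subset_of_nonneg hsub fun i _ _ => by positivity
    _ = (N : ℝ) ^ (-p) + ∑ i ∈ Finset.Ico N (N + K), ((i : ℝ) + 1) ^ (-p) := by
        rw [Finset.sum_eq_sum_Ico_succ_bot (by omega), Nat.sub_add_cancel hN,
          Nat.cast_sub hN, Nat.cast_one, sub_add_cancel]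
    _ ≤ (N : ℝ) ^ (1 - p) + (N : ℝ) ^ (1 - p) / (p - 1) :=
        add_le_add (Real.rpow_le_rpow_of_exponent_le hN1 (by linarith))
          (sum_Ico_add_one_rpow_neg_le hp hN _)
    _ = (1 + 1 / (p - 1)) * (N : ℝ) ^ (1 - p) := by ring
    _ ≤ (1 + 1 / (p - 1)) * y ^ (1 - p) := by
        have : 0 < p - 1 := by linarith
        exact mul_le_mul_of_nonneg_left (Real.rpow_le_rpow_of_nonpos hy hyN (by linarith))
          (by positivity)

lemma sum_ite_le_add_one_rpow_mul_rpow_le {α m : ℝ} (hα : 0 < α) (hm : α < m) {x : ℝ}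
    (hx : 0 ≤ x) (s : Finset ℕ) :
    ∑ i ∈ s, (if x ≤ ((i : ℝ) + 1) ^ (1 / α) then ((i : ℝ) + 1) ^ (-(m / α)) * x ^ m else 0)
      ≤ (1 + 1 / (m / α - 1)) * x ^ α := by
  rcases hx.eq_or_lt with rfl | hx
  · simp [Real.zero_rpow (hα.trans hm).ne', Real.zero_rpow hα.ne']
  have hp : 1 < m / α := (one_lt_div hα).mpr hm
  have hcond : ∀ i : ℕ, x ≤ ((i : ℝ) + 1) ^ (1 / α) ↔ x ^ α ≤ (i : ℝ) + 1 := fun i => by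
    rw [one_div, Real.le_rpow_inv_iff_of_pos hx.le (by positivity) hα]
  have hxm : x ^ m = (x ^ α) ^ (m / α) := by
    rw [← Real.rpow_mul hx.le, mul_div_cancel₀ _ hα.ne']
  simp_rw [hcond, ← Finset.sum_filter, ← Finset.sum_mul]
  calc (∑ i ∈ s with x ^ α ≤ ((i : ℕ) : ℝ) + 1, ((i : ℝ) + 1) ^ (-(m / α))) * x ^ m
      ≤ (1 + 1 / (m / α - 1)) * (x ^ α) ^ (1 - m / α) * (x ^ α) ^ (m / α) := by
        rw [hxm]
        gcongr
        exact sum_filter_le_add_one_rpow_neg_le hp (by positivity) s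
    _ = (1 + 1 / (m / α - 1)) * x ^ α := by
        rw [mul_assoc, ← Real.rpow_add (by positivity), sub_add_cancel, Real.rpow_one]

theorem stmt3_general {Ω : Type*} [MeasureSpace Ω]
    (α m : ℝ) (hα : 0 < α) (hm : α < m)
    (ε : Ω → ℝ) (hεm : Measurable ε)
    (hεα : Integrable (fun ω => |ε ω| ^ α) ℙ) :
    Summable (fun i : ℕ => ((i : ℝ) + 1) ^ (-(m / α)) *
      ∫ ω in {ω | |ε ω| ≤ ((i : ℝ) + 1) ^ (1 / α)}, |ε ω| ^ m ∂ℙ) := by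
  set S : ℕ → Set Ω := fun i => {ω | |ε ω| ≤ ((i : ℝ) + 1) ^ (1 / α)}
  set F : ℕ → Ω → ℝ := fun i => (S i).indicator fun ω => ((i : ℝ) + 1) ^ (-(m / α)) * |ε ω| ^ m
  set C := 1 + 1 / (m / α - 1)
  have hS : ∀ i, MeasurableSet (S i) := fun i => measurableSet_le hεm.abs measurable_const
  have hF_nonneg : ∀ i ω, 0 ≤ F i ω := fun i ω =>
    Set.indicator_nonneg (fun ω _ => by positivity) ω
  have hF_sum_le : ∀ s ω, ∑ i ∈ s, F i ω ≤ C * |ε ω| ^ α := fun s ω =>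
    sum_ite_le_add_one_rpow_mul_rpow_le hα hm (abs_nonneg _) s
  have hF_int : ∀ i, Integrable (F i) ℙ := fun i =>
    (hεα.const_mul C).mono'
      ((measurable_const.mul (hεm.abs.pow_const m)).indicator (hS i)).aestronglyMeasurable
      (.of_forall fun ω => by
        simpa [Real.norm_of_nonneg (hF_nonneg i ω)] using hF_sum_le {i} ω)
  have hterm : ∀ i : ℕ, ((i : ℝ) + 1) ^ (-(m / α)) * ∫ ω in S i, |ε ω| ^ m ∂ℙ = ∫ ω, F i ω ∂ℙ :=
    fun i => by rw [integral_indicator (hS i), integral_const_mul]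
  refine summable_of_sum_range_le (c := ∫ ω, C * |ε ω| ^ α ∂ℙ)
    (fun i => (hterm i).symm ▸ integral_nonneg (hF_nonneg i)) fun n => ?_
  calc ∑ i ∈ Finset.range n, ((i : ℝ) + 1) ^ (-(m / α)) * ∫ ω in S i, |ε ω| ^ m ∂ℙ
      = ∫ ω, ∑ i ∈ Finset.range n, F i ω ∂ℙ := by
        simp_rw [hterm]
        exact (integral_finsetSum _ fun i _ => hF_int i).symm
    _ ≤ ∫ ω, C * |ε ω| ^ α ∂ℙ :=
        integral_mono (integrable_finsetSum _ fun i _ => hF_int i) (hεα.const_mul C)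
          (hF_sum_le _)

/-- Let `0 < α < m` and let `ε` be a real random variable with `E|ε|^α < ∞`.
Then `∑_{i≥1} i^{-m/α} E(|ε|^m 1_{|ε| ≤ i^{1/α}}) < ∞`.
Indexing convention: the Lean index `i : ℕ` corresponds to the index `i+1` of the paper. -/
theorem stmt3 {Ω : Type*} [MeasureSpace Ω] [IsProbabilityMeasure (ℙ : Measure Ω)]
    (α m : ℝ) (hα : 0 < α) (hm : α < m)
    (ε : Ω → ℝ) (hεm : Measurable ε)
    (hεα : Integrable (fun ω => |ε ω| ^ α) ℙ) :
    Summable (fun i : ℕ => ((i : ℝ) + 1) ^ (-(m / α)) *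
      ∫ ω in {ω | |ε ω| ≤ ((i : ℝ) + 1) ^ (1 / α)}, |ε ω| ^ m ∂ℙ) :=
  stmt3_general α m hα hm ε hεm hεα
end

section
/- Let 1 < α < 2 and let ε be a real random variable with Eε = 0 and E|ε|^α < ∞. Then ∑_{i=1}^∞ i^{-1/α} · |E(ε · 1_{{|ε|^α ≤ i}})| < ∞. -/
/-!
Since `E ε = 0`, the truncated mean `E(ε 1_{|ε|^α ≤ i})` equals `-E(ε 1_{|ε|^α > i})`, so the
`i`-th term is at most `i^{-1/α} E(|ε| 1_{|ε|^α > i})`. Exchanging sum and expectation, it remains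
to bound `|ε| ∑_{i < |ε|^α} i^{-1/α}`; comparing the sum with `∫_0^{|ε|^α} t^{-1/α} dt` bounds it
by `|ε|^α / (1 - 1/α)`, which is integrable.
-/

open MeasureTheory ProbabilityTheory Finset

theorem Real.mul_add_one_rpow_sub_one_le {a q : ℝ} (ha : 0 ≤ a) (hq0 : 0 ≤ q) (hq1 : q ≤ 1) :
    q * (a + 1) ^ (q - 1) ≤ (a + 1) ^ q - a ^ q := by
  have ha1 : 0 < a + 1 := by linarith
  have hs : -1 ≤ -(a + 1)⁻¹ := neg_le_neg (inv_le_one_of_one_le₀ (by linarith))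
  have bernoulli := rpow_one_add_le_one_add_mul_self hs hq0 hq1
  rw [show 1 + -(a + 1)⁻¹ = a / (a + 1) by field_simp; ring, Real.div_rpow ha ha1.le,
    div_le_iff₀ (Real.rpow_pos_of_pos ha1 q)] at bernoulli
  rw [Real.rpow_sub_one ha1.ne']
  have : (1 + q * -(a + 1)⁻¹) * (a + 1) ^ q = (a + 1) ^ q - q * ((a + 1) ^ q / (a + 1)) := by
    ring
  linarith

theorem sum_filter_rpow_neg_le {p y : ℝ} (hp0 : 0 ≤ p) (hp1 : p < 1) (hy : 0 ≤ y) (n : ℕ) :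
    ∑ i ∈ (range n).filter (fun i : ℕ => (i : ℝ) + 1 < y), ((i : ℝ) + 1) ^ (-p)
      ≤ y ^ (1 - p) / (1 - p) := by
  have hq : 0 < 1 - p := sub_pos.2 hp1
  -- telescoping against the primitive `t ↦ t ^ (1 - p) / (1 - p)` of `t ↦ t ^ (-p)`, truncated at `y`
  set g : ℕ → ℝ := fun i => min (i : ℝ) y ^ (1 - p)
  have g_zero : g 0 = 0 := by simp [g, hy, Real.zero_rpow hq.ne']
  have step (i : ℕ) : (if (i : ℝ) + 1 < y then ((i : ℝ) + 1) ^ (-p) else 0)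
      ≤ (g (i + 1) - g i) / (1 - p) := by
    rw [le_div_iff₀ hq]
    split_ifs with h
    · have := Real.mul_add_one_rpow_sub_one_le (Nat.cast_nonneg i) hq.le (by linarith)
      simp only [g, Nat.cast_succ, min_eq_left h.le, min_eq_left (by linarith : (i : ℝ) ≤ y)]
      rw [sub_sub_cancel_left] at this
      linarith
    · have : g i ≤ g (i + 1) :=
        Real.rpow_le_rpow (le_min (Nat.cast_nonneg i) hy)
          (min_le_min_right y (by push_cast; linarith)) hq.le
      linarith
  calc ∑ i ∈ (range n).filter (fun i : ℕ => (i : ℝ) + 1 < y), ((i : ℝ) + 1) ^ (-p)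
      = ∑ i ∈ range n, if (i : ℝ) + 1 < y then ((i : ℝ) + 1) ^ (-p) else 0 := sum_filter _ _
    _ ≤ ∑ i ∈ range n, (g (i + 1) - g i) / (1 - p) := sum_le_sum fun i _ => step i
    _ = g n / (1 - p) := by rw [← sum_div, sum_range_sub, g_zero, sub_zero]
    _ ≤ y ^ (1 - p) / (1 - p) := by
      gcongr
      exact Real.rpow_le_rpow (le_min (Nat.cast_nonneg n) hy) (min_le_right _ _) hq.le

theorem sum_rpow_neg_inv_mul_ite_le {α t : ℝ} (hα : 1 < α) (ht : 0 ≤ t) (n : ℕ) :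
    ∑ i ∈ range n, ((i : ℝ) + 1) ^ (-(1 / α)) * (if (i : ℝ) + 1 < t ^ α then t else 0)
      ≤ t ^ α / (1 - 1 / α) := by
  have hα0 : 0 < α := by linarith
  have hp1 : 1 / α < 1 := (div_lt_one hα0).2 hα
  have t_mul_rpow : t * (t ^ α) ^ (1 - 1 / α) = t ^ α := by
    rw [← Real.rpow_mul ht, mul_one_sub, mul_one_div_cancel hα0.ne',
      ← Real.rpow_one_add' ht (by linarith), add_sub_cancel]
  calc ∑ i ∈ range n, ((i : ℝ) + 1) ^ (-(1 / α)) * (if (i : ℝ) + 1 < t ^ α then t else 0)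
      = t * ∑ i ∈ (range n).filter (fun i : ℕ => (i : ℝ) + 1 < t ^ α),
          ((i : ℝ) + 1) ^ (-(1 / α)) := by
        rw [sum_filter, mul_sum]
        refine sum_congr rfl fun i _ => ?_
        split_ifs <;> ring
    _ ≤ t * ((t ^ α) ^ (1 - 1 / α) / (1 - 1 / α)) := by
        gcongr
        exact sum_filter_rpow_neg_le (by positivity) hp1 (by positivity) n
    _ = t ^ α / (1 - 1 / α) := by rw [← mul_div_assoc, t_mul_rpow]

theorem abs_setIntegral_le_setIntegral_compl_abs {X : Type*} [MeasurableSpace X] {μ : Measure X}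
    {f : X → ℝ} {s : Set X} (hs : NullMeasurableSet s μ) (hf : Integrable f μ)
    (hf0 : ∫ x, f x ∂μ = 0) :
    |∫ x in s, f x ∂μ| ≤ ∫ x in sᶜ, |f x| ∂μ := by
  have hsplit := integral_add_compl₀ hs hf
  rw [hf0, add_eq_zero_iff_eq_neg] at hsplit
  rw [hsplit, abs_neg]
  exact abs_integral_le_integral_abs

theorem stmt6_general {Ω : Type*} [MeasureSpace Ω] [IsProbabilityMeasure (ℙ : Measure Ω)]
    (α : ℝ) (hα1 : 1 < α)
    (ε : Ω → ℝ)
    (hεint : Integrable ε ℙ) (hεmean : ∫ ω, ε ω ∂ℙ = 0)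
    (hεα : Integrable (fun ω => |ε ω| ^ α) ℙ) :
    Summable (fun i : ℕ => ((i : ℝ) + 1) ^ (-(1 / α)) *
      |∫ ω in {ω | |ε ω| ^ α ≤ (i : ℝ) + 1}, ε ω ∂ℙ|) := by
  set tail : ℕ → Set Ω := fun i => {ω | (i : ℝ) + 1 < |ε ω| ^ α}
  have tail_null (i : ℕ) : NullMeasurableSet (tail i) ℙ :=
    nullMeasurableSet_lt aemeasurable_const (hεint.aemeasurable.abs.pow_const α)
  set G : ℕ → Ω → ℝ := fun i ω => ((i : ℝ) + 1) ^ (-(1 / α)) * (tail i).indicator (|ε ·|) ω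
  have G_int (i : ℕ) : Integrable (G i) ℙ :=
    (hεint.abs.indicator₀ (tail_null i)).const_mul _
  have term_le (i : ℕ) : ((i : ℝ) + 1) ^ (-(1 / α)) *
      |∫ ω in {ω | |ε ω| ^ α ≤ (i : ℝ) + 1}, ε ω ∂ℙ| ≤ ∫ ω, G i ω ∂ℙ := by
    have : {ω | |ε ω| ^ α ≤ (i : ℝ) + 1} = (tail i)ᶜ := by ext; simp [tail]
    rw [this, integral_const_mul, integral_indicator₀ (tail_null i)]
    gcongr
    simpa using abs_setIntegral_le_setIntegral_compl_abs (tail_null i).compl hεint hεmean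
  refine summable_of_sum_range_le (c := (∫ ω, |ε ω| ^ α ∂ℙ) / (1 - 1 / α))
    (fun i => by positivity) fun n => ?_
  calc _ ≤ ∑ i ∈ range n, ∫ ω, G i ω ∂ℙ := sum_le_sum fun i _ => term_le i
    _ = ∫ ω, ∑ i ∈ range n, G i ω ∂ℙ := (integral_finsetSum _ fun i _ => G_int i).symm
    _ ≤ ∫ ω, |ε ω| ^ α / (1 - 1 / α) ∂ℙ := by
      refine integral_mono (integrable_finsetSum _ fun i _ => G_int i) (hεα.div_const _)
        fun ω => ?_
      simpa [G, tail, Set.indicator_apply] using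
        sum_rpow_neg_inv_mul_ite_le hα1 (abs_nonneg (ε ω)) n
    _ = (∫ ω, |ε ω| ^ α ∂ℙ) / (1 - 1 / α) := integral_div _ _

/-- Let `1 < α < 2` and let `ε` be a real random variable with `Eε = 0` and
`E|ε|^α < ∞`.  Then `∑_{i≥1} i^{-1/α} |E(ε 1_{|ε|^α ≤ i})| < ∞`.
Indexing convention: the Lean index `i : ℕ` corresponds to the index `i+1` of the paper. -/
theorem stmt6 {Ω : Type*} [MeasureSpace Ω] [IsProbabilityMeasure (ℙ : Measure Ω)]
    (α : ℝ) (hα1 : 1 < α) (hα2 : α < 2)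
    (ε : Ω → ℝ) (hεm : Measurable ε)
    (hεint : Integrable ε ℙ) (hεmean : ∫ ω, ε ω ∂ℙ = 0)
    (hεα : Integrable (fun ω => |ε ω| ^ α) ℙ) :
    Summable (fun i : ℕ => ((i : ℝ) + 1) ^ (-(1 / α)) *
      |∫ ω in {ω | |ε ω| ^ α ≤ (i : ℝ) + 1}, ε ω ∂ℙ|) :=
  stmt6_general α hα1 ε hεint hεmean hεα
end

section
/- Let p ≥ 1, let U_1, ..., U_p be independent random variables with values in [0,1] whose cumulative distribution functions F_i are continuous on [0,1], and let R_1, ..., R_p be real random variables such that E[R_i^4 | σ(U_1,...,U_p)] ≤ M almost surely for all i, for some constant M > 0. Set Y(t) = ∑_{i=1}^p R_i·1_{{U_i ≤ t}} and F = F_1 + ... + F_p. Then for all 0 ≤ t_1 ≤ t_2 ≤ 1: E(Y(t_2) − Y(t_1))² ≤ M^{1/2}·p²·(F(t_2) − F(t_1)). -/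
/-!
On `Aᵢ = {t₁ < Uᵢ ≤ t₂}` the increment is `Y(t₂) - Y(t₁) = ∑ᵢ Rᵢ 1_{Aᵢ}`, so by Cauchy–Schwarz its
square is at most `p ∑ᵢ Rᵢ² 1_{Aᵢ}`. Since `Aᵢ` is `σ(U)`-measurable, the conditional moment bound
gives `∫_{Aᵢ} Rᵢ⁴ ≤ M ℙ(Aᵢ)`, and AM–GM, `Rᵢ² ≤ Rᵢ⁴ / (2√M) + √M / 2`, turns this into
`∫_{Aᵢ} Rᵢ² ≤ √M ℙ(Aᵢ) = √M (Fᵢ(t₂) - Fᵢ(t₁))`. Summing, and using `p ≤ p²`, gives the claim.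
-/

open MeasureTheory ProbabilityTheory

section

variable {α : Type*} [MeasurableSpace α] {μ : Measure α} [IsFiniteMeasure μ]

lemma integrable_sq_of_integrable_pow_four {f : α → ℝ} (hf : Integrable (fun x => f x ^ 4) μ) :
    Integrable (fun x => f x ^ 2) μ := by
  have hmeas : AEStronglyMeasurable (fun x => f x ^ 2) μ := by
    convert hf.aestronglyMeasurable.aemeasurable.sqrt.aestronglyMeasurable using 2 with x
    rw [show f x ^ 4 = (f x ^ 2) ^ 2 by ring, Real.sqrt_sq (sq_nonneg _)]
  refine ((memLp_two_iff_integrable_sq hmeas).2 ?_).integrable one_le_two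
  simpa only [← pow_mul] using hf

lemma sq_le_pow_four_div_add_half {x c : ℝ} (hc : 0 < c) : x ^ 2 ≤ x ^ 4 / (2 * c) + c / 2 := by
  rw [div_add_div _ _ (by positivity) two_ne_zero, le_div_iff₀ (by positivity)]
  nlinarith [sq_nonneg (x ^ 2 - c)]

lemma setIntegral_sq_le_sqrt_mul_measureReal {f : α → ℝ} {s : Set α} {M : ℝ} (hM : 0 < M)
    (hf : Integrable (fun x => f x ^ 4) μ) (hs : ∫ x in s, f x ^ 4 ∂μ ≤ M * μ.real s) :
    ∫ x in s, f x ^ 2 ∂μ ≤ √M * μ.real s := by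
  have hc : 0 < √M := Real.sqrt_pos.2 hM
  have hg : Integrable (fun x => f x ^ 4 / (2 * √M) + √M / 2) μ :=
    (hf.div_const _).add (integrable_const _)
  calc ∫ x in s, f x ^ 2 ∂μ
      ≤ ∫ x in s, (f x ^ 4 / (2 * √M) + √M / 2) ∂μ :=
        integral_mono_of_nonneg (.of_forall fun x => sq_nonneg _) hg.integrableOn
          (.of_forall fun x => sq_le_pow_four_div_add_half hc)
    _ = (∫ x in s, f x ^ 4 ∂μ) / (2 * √M) + √M / 2 * μ.real s := by
        rw [integral_add (hf.div_const _).integrableOn (integrable_const _), integral_div,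
          setIntegral_const, smul_eq_mul, mul_comm (μ.real s)]
    _ ≤ M * μ.real s / (2 * √M) + √M / 2 * μ.real s := by gcongr
    _ = √M * μ.real s := by
        field_simp
        rw [Real.sq_sqrt hM.le]
        ring

lemma measureReal_preimage_Ioc {u : α → ℝ} (hu : Measurable u) {a b : ℝ} (hab : a ≤ b) :
    μ.real (u ⁻¹' Set.Ioc a b) = μ.real {x | u x ≤ b} - μ.real {x | u x ≤ a} := by
  rw [← Set.Iic_sdiff_Iic, Set.preimage_sdiff,
    measureReal_sdiff (Set.preimage_mono (Set.Iic_subset_Iic.2 hab)) (hu measurableSet_Iic)]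
  rfl

end

lemma setIntegral_le_of_condExp_le {α : Type*} {m m₀ : MeasurableSpace α} {μ : Measure α}
    [IsFiniteMeasure μ] (hm : m ≤ m₀) {f : α → ℝ} {M : ℝ} (hf : Integrable f μ)
    (hfM : ∀ᵐ x ∂μ, μ[f | m] x ≤ M) {s : Set α} (hs : MeasurableSet[m] s) :
    ∫ x in s, f x ∂μ ≤ M * μ.real s := by
  rw [← setIntegral_condExp hm hf hs, mul_comm, ← smul_eq_mul, ← setIntegral_const]
  exact setIntegral_mono_ae integrable_condExp.integrableOn (integrable_const M).integrableOn hfM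

lemma sq_sum_indicator_le_card_mul_sum_indicator_sq {ι α : Type*} [Fintype ι] (s : ι → Set α)
    (f : ι → α → ℝ) (x : α) :
    (∑ i, (s i).indicator (f i) x) ^ 2 ≤
      Fintype.card ι * ∑ i, (s i).indicator (fun y => f i y ^ 2) x := by
  refine (sq_sum_le_card_mul_sum_sq (s := Finset.univ)).trans_eq ?_
  congr 1
  refine Finset.sum_congr rfl fun i _ => ?_
  by_cases hx : x ∈ s i <;> simp [hx]

lemma sum_mul_ite_le_sub_sum_mul_ite_le {ι α : Type*} [Fintype ι] (r u : ι → α → ℝ)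
    {t₁ t₂ : ℝ} (h : t₁ ≤ t₂) (x : α) :
    ∑ i, r i x * (if u i x ≤ t₂ then (1 : ℝ) else 0) -
        ∑ i, r i x * (if u i x ≤ t₁ then (1 : ℝ) else 0) =
      ∑ i, (u i ⁻¹' Set.Ioc t₁ t₂).indicator (r i) x := by
  rw [← Finset.sum_sub_distrib]
  refine Finset.sum_congr rfl fun i _ => ?_
  by_cases h₁ : u i x ≤ t₁
  · simp [h₁, h₁.trans h]
  · by_cases h₂ : u i x ≤ t₂ <;> simp [h₁, h₂, not_le.1 h₁]

theorem stmt13_general {Ω : Type*} [MeasureSpace Ω] [IsProbabilityMeasure (ℙ : Measure Ω)]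
    (p : ℕ) (U R : Fin p → Ω → ℝ)
    (hUm : ∀ i, Measurable (U i))
    (F : Fin p → ℝ → ℝ)
    (hF : ∀ i t, F i t = (ℙ {ω | U i ω ≤ t}).toReal)
    (M : ℝ) (hM : 0 < M)
    (hRint : ∀ i, Integrable (fun ω => R i ω ^ 4) ℙ)
    (hcond : ∀ i, ∀ᵐ ω ∂ℙ,
      (ℙ[fun ω' => R i ω' ^ 4 |
          MeasurableSpace.comap (fun ω' (j : Fin p) => U j ω') MeasurableSpace.pi]) ω ≤ M)
    (t₁ t₂ : ℝ) (h12 : t₁ ≤ t₂) :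
    ∫ ω, (∑ i, R i ω * (if U i ω ≤ t₂ then (1 : ℝ) else 0) -
          ∑ i, R i ω * (if U i ω ≤ t₁ then (1 : ℝ) else 0)) ^ 2 ∂ℙ
      ≤ Real.sqrt M * (p : ℝ) ^ 2 * ((∑ i, F i t₂) - ∑ i, F i t₁) := by
  set A : Fin p → Set Ω := fun i => U i ⁻¹' Set.Ioc t₁ t₂
  have hm : MeasurableSpace.comap (fun ω (j : Fin p) => U j ω) MeasurableSpace.pi ≤
      MeasureSpace.toMeasurableSpace :=
    (measurable_pi_lambda _ hUm).comap_le
  have hA : ∀ i, MeasurableSet[MeasurableSpace.comap (fun ω (j : Fin p) => U j ω)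
      MeasurableSpace.pi] (A i) :=
    fun i => ⟨_, measurable_pi_apply i measurableSet_Ioc, rfl⟩
  have hPA : ∀ i, (ℙ : Measure Ω).real (A i) = F i t₂ - F i t₁ := fun i => by
    rw [hF, hF, measureReal_preimage_Ioc (hUm i) h12]
    rfl
  have hlocal : ∀ i, ∫ ω in A i, R i ω ^ 2 ≤ √M * (F i t₂ - F i t₁) := fun i =>
    hPA i ▸ setIntegral_sq_le_sqrt_mul_measureReal hM (hRint i)
      (setIntegral_le_of_condExp_le hm (hRint i) (hcond i) (hA i))
  have hint : ∀ i, Integrable ((A i).indicator fun ω => R i ω ^ 2) :=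
    fun i => (integrable_sq_of_integrable_pow_four (hRint i)).indicator (hm _ (hA i))
  have hF12 : 0 ≤ ∑ i, (F i t₂ - F i t₁) :=
    Finset.sum_nonneg fun i _ => hPA i ▸ measureReal_nonneg
  calc _ ≤ ∫ ω, (p : ℝ) * ∑ i, (A i).indicator (fun ω => R i ω ^ 2) ω := by
        refine integral_mono_of_nonneg (.of_forall fun ω => sq_nonneg _)
          ((integrable_finsetSum _ fun i _ => hint i).const_mul _) (.of_forall fun ω => ?_)
        simpa only [sum_mul_ite_le_sub_sum_mul_ite_le R U h12, Fintype.card_fin] using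
          sq_sum_indicator_le_card_mul_sum_indicator_sq A R ω
    _ = p * ∑ i, ∫ ω in A i, R i ω ^ 2 := by
        rw [integral_const_mul, integral_finsetSum _ fun i _ => hint i]
        simp only [integral_indicator (hm _ (hA _))]
    _ ≤ p * ∑ i, √M * (F i t₂ - F i t₁) := by gcongr with i; exact hlocal i
    _ = √M * p * ∑ i, (F i t₂ - F i t₁) := by rw [← Finset.mul_sum]; ring
    _ ≤ √M * p ^ 2 * ((∑ i, F i t₂) - ∑ i, F i t₁) := by
        rw [← Finset.sum_sub_distrib]
        gcongr
        exact_mod_cast Nat.le_self_pow two_ne_zero p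

/-- Let `p ≥ 1`, `U_1,…,U_p` independent `[0,1]`-valued random variables with
continuous CDFs `F_i`, and `R_1,…,R_p` real random variables with
`E[R_i^4 | σ(U_1,…,U_p)] ≤ M` a.s.  With `Y(t) = ∑_i R_i 1_{U_i ≤ t}` and `F = ∑_i F_i`,
for all `0 ≤ t₁ ≤ t₂ ≤ 1`: `E(Y(t₂)-Y(t₁))² ≤ M^{1/2} p² (F(t₂)-F(t₁))`. -/
theorem stmt13 {Ω : Type*} [MeasureSpace Ω] [IsProbabilityMeasure (ℙ : Measure Ω)]
    (p : ℕ) (hp : 1 ≤ p) (U R : Fin p → Ω → ℝ)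
    (hUm : ∀ i, Measurable (U i)) (hUrange : ∀ i ω, U i ω ∈ Set.Icc (0 : ℝ) 1)
    (hUindep : iIndepFun U ℙ)
    (F : Fin p → ℝ → ℝ)
    (hF : ∀ i t, F i t = (ℙ {ω | U i ω ≤ t}).toReal)
    (hFcont : ∀ i, ContinuousOn (F i) (Set.Icc 0 1))
    (M : ℝ) (hM : 0 < M)
    (hRm : ∀ i, Measurable (R i))
    (hRint : ∀ i, Integrable (fun ω => R i ω ^ 4) ℙ)
    (hcond : ∀ i, ∀ᵐ ω ∂ℙ,
      (ℙ[fun ω' => R i ω' ^ 4 |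
          MeasurableSpace.comap (fun ω' (j : Fin p) => U j ω') MeasurableSpace.pi]) ω ≤ M)
    (t₁ t₂ : ℝ) (h0 : 0 ≤ t₁) (h12 : t₁ ≤ t₂) (h1 : t₂ ≤ 1) :
    ∫ ω, (∑ i, R i ω * (if U i ω ≤ t₂ then (1 : ℝ) else 0) -
          ∑ i, R i ω * (if U i ω ≤ t₁ then (1 : ℝ) else 0)) ^ 2 ∂ℙ
      ≤ Real.sqrt M * (p : ℝ) ^ 2 * ((∑ i, F i t₂) - ∑ i, F i t₁) :=
  stmt13_general p U R hUm F hF M hM hRint hcond t₁ t₂ h12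
end
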